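/- For all integers n ≥ 1 and k with 0 ≤ k ≤ ⌊(n−1)/2⌋, the perfect matching M_0 = {u_iv_i : i = 1,…,n} of the graph H_k satisfies f(H_k, M_0) = n − 1; consequently F(H_k) = n − 1. In particular, for k = ⌊(n−1)/2⌋ one has f(H_k) = ⌊n/2⌋, so the lower bound f(G) ≥ ⌊n/2⌋ for graphs G ∈ 𝒢_{2n} with F(G) = n−1 is attained. -/

import Mathlib

open SimpleGraph

/-- `M` is a perfect matching of the simple graph `G`, viewed as a set of edges:
the edges of `M` are pairwise disjoint edges of `G` covering every vertex. -/
def IsPM {V : Type*} (G : SimpleGraph V) (M : Set (Sym2 V)) : Prop :=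
  M ⊆ G.edgeSet ∧
  (∀ e ∈ M, ∀ f ∈ M, e ≠ f → ∀ v : V, v ∈ e → v ∉ f) ∧
  (∀ v : V, ∃ e ∈ M, v ∈ e)

/-- `S` is a forcing set of the perfect matching `M` of `G`:
`S ⊆ M` and `M` is the unique perfect matching of `G` containing `S`. -/
def IsForcingSet {V : Type*} (G : SimpleGraph V) (M S : Set (Sym2 V)) : Prop :=
  S ⊆ M ∧ ∀ M', IsPM G M' → S ⊆ M' → M' = M

/-- The forcing number `f(G,M)`: smallest cardinality of a forcing set of `M`. -/
noncomputable def forcingNum {V : Type*} (G : SimpleGraph V) (M : Set (Sym2 V)) : ℕ :=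
  sInf {k | ∃ S, IsForcingSet G M S ∧ S.ncard = k}

/-- The minimum forcing number `f(G)`. -/
noncomputable def minForcing {V : Type*} (G : SimpleGraph V) : ℕ :=
  sInf {k | ∃ M, IsPM G M ∧ forcingNum G M = k}

/-- The maximum forcing number `F(G)`. -/
noncomputable def maxForcing {V : Type*} (G : SimpleGraph V) : ℕ :=
  sSup {k | ∃ M, IsPM G M ∧ forcingNum G M = k}

/-- Vertex connectivity `κ(G)`: least size of a set of vertices whose deletion
disconnects the graph or leaves at most one vertex. -/
noncomputable def vertexConn {V : Type*} (G : SimpleGraph V) : ℕ :=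
  sInf {k | ∃ X : Set V, X.ncard = k ∧ (¬ (G.induce Xᶜ).Connected ∨ Xᶜ.ncard ≤ 1)}

/-- Edge connectivity `λ(G)`: least size of a set of edges whose deletion
disconnects the graph. -/
noncomputable def edgeConn {V : Type*} (G : SimpleGraph V) : ℕ :=
  sInf {k | ∃ F : Set (Sym2 V), F ⊆ G.edgeSet ∧ F.ncard = k ∧ ¬ (G.deleteEdges F).Connected}

/-- `G` is `l`-extendable: `G` is connected, has at least `2l+2` vertices, has a
perfect matching, and every matching of size `l` extends to a perfect matching. -/
def IsExtendable {V : Type*} [Fintype V] (G : SimpleGraph V) (l : ℕ) : Prop :=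
  G.Connected ∧ 2 * l + 2 ≤ Fintype.card V ∧ (∃ M, IsPM G M) ∧
    ∀ N : Set (Sym2 V), N ⊆ G.edgeSet →
      (∀ e ∈ N, ∀ f ∈ N, e ≠ f → ∀ v : V, v ∈ e → v ∉ f) → N.ncard = l →
      ∃ M, IsPM G M ∧ N ⊆ M

/-- `G` is factor-critical: deleting any vertex leaves a graph with a perfect matching. -/
def IsFactorCritical {V : Type*} (G : SimpleGraph V) : Prop :=
  ∀ v : V, ∃ M, IsPM (G.induce {v}ᶜ) M

/-- `o(G)`: the number of connected components of odd order. -/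
noncomputable def oddComponents {V : Type*} (G : SimpleGraph V) : ℕ :=
  {c : G.ConnectedComponent | Odd c.supp.ncard}.ncard

/-- `G` belongs to `𝒦_{n,n}⁺`: it is obtained from `K_{n,n}` by adding edges inside one
partite set; equivalently there is an independent set `A` of size `n` all of whose
vertices are adjacent to all vertices outside `A`. -/
def InKnnPlus {V : Type*} (n : ℕ) (G : SimpleGraph V) : Prop :=
  ∃ A : Set V, A.ncard = n ∧ (∀ a ∈ A, ∀ b ∈ A, ¬ G.Adj a b) ∧
    ∀ a ∈ A, ∀ b ∉ A, G.Adj a b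

/-- `M` is a perfect matching of the subgraph of `G` induced by the vertex set `T`. -/
def IsPMOn {V : Type*} (G : SimpleGraph V) (T : Set V) (M : Set (Sym2 V)) : Prop :=
  M ⊆ G.edgeSet ∧ (∀ e ∈ M, ∀ w : V, w ∈ e → w ∈ T) ∧
  (∀ e ∈ M, ∀ f ∈ M, e ≠ f → ∀ v : V, v ∈ e → v ∉ f) ∧
  (∀ w ∈ T, ∃ e ∈ M, w ∈ e)

/-- The forcing number of the perfect matching `M` of the subgraph of `G`
induced by the vertex set `T`. -/
noncomputable def forcingNumOn {V : Type*} (G : SimpleGraph V) (T : Set V)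
    (M : Set (Sym2 V)) : ℕ :=
  sInf {k | ∃ S, S ⊆ M ∧ (∀ M', IsPMOn G T M' → S ⊆ M' → M' = M) ∧ S.ncard = k}

/-- `{i,j}` is one of the `k` special pairs `{2t, 2t+1}` (0-indexed), `t < k`. -/
def pairIdx (k : ℕ) {n : ℕ} (i j : Fin n) : Prop :=
  ∃ t, t < k ∧ ((i.val = 2 * t ∧ j.val = 2 * t + 1) ∨ (j.val = 2 * t ∧ i.val = 2 * t + 1))

/-- The graph `H_k` on vertices `u_0,…,u_{n-1}` (left copy) and `v_0,…,v_{n-1}`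
(right copy): edges `u_i v_i` for all `i`; `u_{2t} u_{2t+1}` and `v_{2t} v_{2t+1}`
for `t < k`; and `u_i v_j`, `u_j v_i` for every pair `i ≠ j` that is not one of the
`k` special pairs. -/
def Hgraph (n k : ℕ) : SimpleGraph (Fin n ⊕ Fin n) :=
  SimpleGraph.fromRel (fun x y =>
    match x, y with
    | Sum.inl i, Sum.inr j => i = j ∨ ¬ pairIdx k i j
    | Sum.inl i, Sum.inl j => pairIdx k i j
    | Sum.inr i, Sum.inr j => pairIdx k i j
    | Sum.inr _, Sum.inl _ => False)

/-- The perfect matching `M₀ = {u_i v_i : i}` of `H_k`. -/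
def M0 (n : ℕ) : Set (Sym2 (Fin n ⊕ Fin n)) :=
  {e | ∃ i : Fin n, e = s(Sum.inl i, Sum.inr i)}


/-!
If two edges `ab`, `cd` of a perfect matching `M` lie on a `4`-cycle `a b c d`, exchanging them
for `ad`, `cb` gives another perfect matching; so no such pair of edges lies outside a forcing set
of `M`. In `H_k` any two edges `u_iv_i`, `u_jv_j` of `M₀` lie on such a cycle (through `u_iv_j`,
`u_jv_i`, or through `u_iu_j`, `v_iv_j` when `{i, j}` is a special pair), hence
`f(H_k, M₀) = n - 1`, the largest possible value, since all edges but one of a perfect matching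
force it.

For an arbitrary perfect matching `M`, let `N ⊆ M` contain no such pair. Its edges inside `U` or
`V` are special pairs, at most one for each `t < k`. For two cross edges `u_av_b`, `u_{a'}v_{b'}`
of `N`, one of `{a, b'}`, `{a', b}` is a special pair; this orients a tournament in which every
vertex has out-degree at most one, so there are at most three cross edges, and the blocks
`t = a / 2` of the arcs `a → b'`, at least one fewer than the cross edges, have both special
pairs occupied. Hence `|N| ≤ k + 1` and `f(H_k, M) ≥ n - 1 - k`. Equality holds for the
matching of all special pairs and the remaining `u_iv_i`, which is forced by its edges at
`u_0, …, u_{n-2}`: `v_{n-1}` is then left with the single neighbour `u_{n-1}`, and every other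
free `v_i` with its partner.
-/

section PerfectMatching

variable {V : Type*} {G : SimpleGraph V} {M M' : Set (Sym2 V)}

theorem IsPM.eq_of_mem_of_mem (hM : IsPM G M) {e f : Sym2 V} {v : V} (he : e ∈ M) (hf : f ∈ M)
    (hve : v ∈ e) (hvf : v ∈ f) : e = f :=
  by_contra fun hne => hM.2.1 e he f hf hne v hve hvf

noncomputable def IsPM.mate (hM : IsPM G M) (v : V) : V :=
  Sym2.Mem.other (hM.2.2 v).choose_spec.2

theorem IsPM.mk_mate_mem (hM : IsPM G M) (v : V) : s(v, hM.mate v) ∈ M := by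
  rw [IsPM.mate, Sym2.other_spec]
  exact (hM.2.2 v).choose_spec.1

theorem IsPM.mk_mem_iff (hM : IsPM G M) {v w : V} : s(v, w) ∈ M ↔ hM.mate v = w :=
  ⟨fun h => Sym2.congr_right.mp <|
      hM.eq_of_mem_of_mem (hM.mk_mate_mem v) h (Sym2.mem_mk_left _ _) (Sym2.mem_mk_left _ _),
    fun h => h ▸ hM.mk_mate_mem v⟩

theorem IsPM.adj_mate (hM : IsPM G M) (v : V) : G.Adj v (hM.mate v) :=
  hM.1 (hM.mk_mate_mem v)

theorem IsPM.mate_mate (hM : IsPM G M) (v : V) : hM.mate (hM.mate v) = v :=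
  hM.mk_mem_iff.mp (Sym2.eq_swap ▸ hM.mk_mate_mem v)

theorem IsPM.mem_iff (hM : IsPM G M) {e : Sym2 V} : e ∈ M ↔ ∃ v, s(v, hM.mate v) = e := by
  refine ⟨fun he => ?_, fun ⟨v, hv⟩ => hv ▸ hM.mk_mate_mem v⟩
  induction e using Sym2.ind with
  | _ v w => exact ⟨v, by rw [hM.mk_mem_iff.mp he]⟩

theorem isPM_range {σ : V → V} (hσ : Function.Involutive σ) (hadj : ∀ v, G.Adj v (σ v)) :
    IsPM G (Set.range fun v => s(v, σ v)) := by
  have hmem : ∀ v x, x ∈ s(v, σ v) → s(v, σ v) = s(x, σ x) := by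
    intro v x hx
    rcases Sym2.mem_iff.mp hx with rfl | rfl
    · rfl
    · rw [hσ v, Sym2.eq_swap]
  refine ⟨?_, ?_, fun v => ⟨_, ⟨v, rfl⟩, Sym2.mem_mk_left _ _⟩⟩
  · rintro _ ⟨v, rfl⟩
    exact hadj v
  · rintro _ ⟨v, rfl⟩ _ ⟨w, rfl⟩ hne x hxv hxw
    exact hne ((hmem v x hxv).trans (hmem w x hxw).symm)

theorem IsPM.eq_of_subset (hM : IsPM G M) (hM' : IsPM G M') (h : M ⊆ M') : M' = M := by
  refine Set.Subset.antisymm (fun e he => ?_) h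
  obtain ⟨v, rfl⟩ := hM'.mem_iff.mp he
  rw [hM'.mk_mem_iff.mp (h (hM.mk_mate_mem v))]
  exact hM.mk_mate_mem v

theorem IsPM.card_eq_two_mul_ncard [Fintype V] (hM : IsPM G M) :
    Fintype.card V = 2 * M.ncard := by
  classical
  have hedge : (fromEdgeSet M).edgeSet = M := by
    rw [edgeSet_fromEdgeSet, sdiff_eq_left, Set.disjoint_left]
    exact fun e he => G.not_isDiag_of_mem_edgeSet (hM.1 he)
  have hdeg : ∀ v, (fromEdgeSet M).degree v = 1 := fun v =>
    degree_eq_one_iff_existsUnique_adj.mpr ⟨hM.mate v, (fromEdgeSet_adj _).mpr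
      ⟨hM.mk_mate_mem v, (hM.adj_mate v).ne⟩, fun w hw => (hM.mk_mem_iff.mp hw.1).symm⟩
  have := (fromEdgeSet M).sum_degrees_eq_twice_card_edges
  simp only [hdeg, Finset.sum_const, Finset.card_univ, smul_eq_mul, mul_one] at this
  rw [this, ← Set.ncard_coe_finset, coe_edgeFinset, hedge]

theorem IsPM.exists_swap (hM : IsPM G M) {a b c d : V} (hab : s(a, b) ∈ M)
    (hcd : s(c, d) ∈ M) (hne : s(a, b) ≠ s(c, d)) (had : G.Adj a d) (hcb : G.Adj c b) :
    ∃ M', IsPM G M' ∧ M \ {s(a, b), s(c, d)} ⊆ M' ∧ s(a, d) ∈ M' \ M := by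
  classical
  rw [hM.mk_mem_iff] at hab hcd
  have hba : hM.mate b = a := by rw [← hab, hM.mate_mate]
  have hdc : hM.mate d = c := by rw [← hcd, hM.mate_mate]
  have hac : a ≠ c := by rintro rfl; exact hne (by rw [← hab, ← hcd])
  have hbd : b ≠ d := fun h => hac (by rw [← hba, h, hdc])
  have hab' : a ≠ b := hab ▸ (hM.adj_mate a).ne
  have hcd' : c ≠ d := hcd ▸ (hM.adj_mate c).ne
  -- conjugate the involution `mate` by the transposition of `b` and `d`
  set μ := fun v => Equiv.swap b d (hM.mate (Equiv.swap b d v))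
  have hμ : Function.Involutive μ := fun v => by simp [μ, hM.mate_mate]
  have hμa : μ a = d := by simp [μ, Equiv.swap_apply_of_ne_of_ne hab' had.ne, hab]
  have hμc : μ c = b := by simp [μ, Equiv.swap_apply_of_ne_of_ne hcb.ne hcd', hcd]
  have hμb : μ b = c := by rw [← hμc, hμ]
  have hμd : μ d = a := by rw [← hμa, hμ]
  have hμ_eq : ∀ v, v ≠ a → v ≠ b → v ≠ c → v ≠ d → μ v = hM.mate v := by
    intro v hva hvb hvc hvd
    have hmb : hM.mate v ≠ b := fun h => hva (by rw [← hba, ← h, hM.mate_mate])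
    have hmd : hM.mate v ≠ d := fun h => hvc (by rw [← hdc, ← h, hM.mate_mate])
    simp [μ, Equiv.swap_apply_of_ne_of_ne hvb hvd, Equiv.swap_apply_of_ne_of_ne hmb hmd]
  refine ⟨_, isPM_range hμ fun v => ?_, fun e ⟨he, hne⟩ => ?_, ⟨a, by simp only [hμa]⟩, ?_⟩
  · by_cases hva : v = a
    · rw [hva, hμa]; exact had
    by_cases hvc : v = c
    · rw [hvc, hμc]; exact hcb
    by_cases hvb : v = b
    · rw [hvb, hμb]; exact hcb.symm
    by_cases hvd : v = d
    · rw [hvd, hμd]; exact had.symm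
    rw [hμ_eq v hva hvb hvc hvd]
    exact hM.adj_mate v
  · obtain ⟨v, rfl⟩ := hM.mem_iff.mp he
    refine ⟨v, ?_⟩
    simp only [Set.mem_insert_iff, Set.mem_singleton_iff, not_or] at hne
    simp only
    rw [hμ_eq v] <;> rintro rfl
    exacts [hne.1 (by rw [hab]), hne.1 (by rw [hba, Sym2.eq_swap]),
      hne.2 (by rw [hcd]), hne.2 (by rw [hdc, Sym2.eq_swap])]
  · rw [hM.mk_mem_iff, hab]
    exact hbd

theorem IsPM.isForcingSet_diff_singleton (hM : IsPM G M) {e : Sym2 V} (he : e ∈ M) :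
    IsForcingSet G M (M \ {e}) := by
  refine ⟨Set.sdiff_subset, fun M' hM' hsub => hM.eq_of_subset hM' fun f hf => ?_⟩
  by_cases hfe : f = e
  swap
  · exact hsub ⟨hf, hfe⟩
  subst hfe
  obtain ⟨a, rfl⟩ := hM.mem_iff.mp hf
  refine hM'.mk_mem_iff.mpr (by_contra fun hx => ?_)
  -- a new partner `x` of `a` would keep its old edge, whose other end must then be `a`
  set x := hM'.mate a
  have hxa : x ≠ a := (hM'.adj_mate a).ne.symm
  have hxM : s(x, hM.mate x) ∈ M \ {s(a, hM.mate a)} := by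
    refine ⟨hM.mk_mate_mem x, fun h => ?_⟩
    rcases Sym2.mem_iff.mp (h ▸ Sym2.mem_mk_left x (hM.mate x)) with h | h
    exacts [hxa h, hx h]
  have : hM.mate x = a := by rw [← hM'.mk_mem_iff.mp (hsub hxM), hM'.mate_mate]
  exact hx (by rw [← this, hM.mate_mate])

end PerfectMatching

section Forcing

variable {V : Type*} {G : SimpleGraph V} {M S : Set (Sym2 V)}

theorem forcingNum_le (h : IsForcingSet G M S) : forcingNum G M ≤ S.ncard :=
  Nat.sInf_le ⟨S, h, rfl⟩

theorem minForcing_le (hM : IsPM G M) : minForcing G ≤ forcingNum G M :=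
  Nat.sInf_le ⟨M, hM, rfl⟩

theorem IsPM.isForcingSet_self (hM : IsPM G M) : IsForcingSet G M M :=
  ⟨subset_rfl, fun _ hM' h => hM.eq_of_subset hM' h⟩

theorem IsPM.forcingNum_le_ncard_sub_one [Finite V] (hM : IsPM G M) :
    forcingNum G M ≤ M.ncard - 1 := by
  rcases M.eq_empty_or_nonempty with rfl | ⟨e, he⟩
  · exact (forcingNum_le hM.isForcingSet_self).trans (by simp)
  · rw [← Set.ncard_sdiff_singleton_of_mem he]
    exact forcingNum_le (hM.isForcingSet_diff_singleton he)

/-- No two edges `ab`, `cd` of `N` lie on a `4`-cycle `a b c d` of `G`. -/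
def NoAlternatingSquare (G : SimpleGraph V) (N : Set (Sym2 V)) : Prop :=
  ∀ a b c d, s(a, b) ∈ N → s(c, d) ∈ N → s(a, b) ≠ s(c, d) → G.Adj a d →
    ¬ G.Adj c b

theorem IsForcingSet.noAlternatingSquare_diff (hM : IsPM G M) (hS : IsForcingSet G M S) :
    NoAlternatingSquare G (M \ S) := by
  intro a b c d hab hcd hne had hcb
  obtain ⟨M', hM', hsub, hadM', hadM⟩ := hM.exists_swap hab.1 hcd.1 hne had hcb
  refine hadM (hS.2 M' hM' (fun e he => hsub ⟨hS.1 he, ?_⟩) ▸ hadM')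
  rintro (rfl | rfl)
  exacts [hab.2 he, hcd.2 he]

theorem IsPM.ncard_sub_le_forcingNum [Finite V] (hM : IsPM G M) {c : ℕ}
    (h : ∀ N ⊆ M, NoAlternatingSquare G N → N.ncard ≤ c) :
    M.ncard - c ≤ forcingNum G M := by
  refine le_csInf ⟨_, M, hM.isForcingSet_self, rfl⟩ ?_
  rintro _ ⟨S, hS, rfl⟩
  have hN := h _ Set.sdiff_subset (hS.noAlternatingSquare_diff hM)
  rw [Set.ncard_sdiff hS.1] at hN
  have := Set.ncard_le_ncard hS.1
  omega

end Forcing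

section Tournament

variable {α β : Type*} {P : Set α} {R : α → α → Prop}

theorem exists_arc_of_three (htot : ∀ p ∈ P, ∀ q ∈ P, p ≠ q → R p q ∨ R q p)
    (hfun : ∀ p ∈ P, ∀ q ∈ P, ∀ r ∈ P, R p q → R p r → q = r) {p q r : α}
    (hp : p ∈ P) (hq : q ∈ P) (hr : r ∈ P) (hpq : p ≠ q) (hpr : p ≠ r) (hqr : q ≠ r) :
    R p q ∨ R p r := by
  rcases htot p hp q hq hpq with h | hqp
  · exact Or.inl h
  rcases htot p hp r hr hpr with h | hrp
  · exact Or.inr h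
  rcases htot q hq r hr hqr with hqr' | hrq
  · exact absurd (hfun q hq p hp r hr hqp hqr') hpr
  · exact absurd (hfun r hr p hp q hq hrp hrq) hpq

theorem ncard_le_three_of_tournament (htot : ∀ p ∈ P, ∀ q ∈ P, p ≠ q → R p q ∨ R q p)
    (hfun : ∀ p ∈ P, ∀ q ∈ P, ∀ r ∈ P, R p q → R p r → q = r) : P.ncard ≤ 3 := by
  by_contra! h
  obtain ⟨p, q, r, s, hp, hq, hr, hs, hpq, hpr, hps, hqr, hqs, hrs⟩ :=
    (Set.three_lt_ncard_iff (Set.finite_of_ncard_pos (by omega))).mp h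
  -- the out-neighbour of `p` would lie in each of `{q, r}`, `{q, s}`, `{r, s}`
  have h₁ := exists_arc_of_three htot hfun hp hq hr hpq hpr hqr
  have h₂ := exists_arc_of_three htot hfun hp hq hs hpq hps hqs
  have h₃ := exists_arc_of_three htot hfun hp hr hs hpr hps hrs
  have := hfun p hp
  rcases h₁ with h₁ | h₁ <;> rcases h₂ with h₂ | h₂ <;> rcases h₃ with h₃ | h₃ <;> grind

theorem ncard_le_ncard_image_add_one_of_tournament (f : α → β)
    (htot : ∀ p ∈ P, ∀ q ∈ P, p ≠ q → R p q ∨ R q p)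
    (hfun : ∀ p ∈ P, ∀ q ∈ P, ∀ r ∈ P, R p q → R p r → q = r)
    (hf : ∀ p ∈ P, ∀ q ∈ P, ∀ r ∈ P, f p = f q → f p = f r → p = q ∨ p = r ∨ q = r) :
    P.ncard ≤ (f '' {p ∈ P | ∃ q ∈ P, R p q}).ncard + 1 := by
  rcases P.finite_or_infinite with hP | hP
  swap
  · simp [hP.ncard]
  set T := f '' {p ∈ P | ∃ q ∈ P, R p q}
  have hfin : T.Finite := (hP.subset (Set.sep_subset _ _)).image f
  have hmem : ∀ p ∈ P, ∀ q ∈ P, R p q → f p ∈ T := fun p hp q hq h => ⟨p, ⟨hp, q, hq, h⟩, rfl⟩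
  have h3 := ncard_le_three_of_tournament htot hfun
  interval_cases hc : P.ncard
  · omega
  · omega
  · obtain ⟨p, hp, q, hq, hpq⟩ := (Set.one_lt_ncard hP).mp (by omega)
    have : T.Nonempty := (htot p hp q hq hpq).elim (fun h => ⟨_, hmem p hp q hq h⟩)
      (fun h => ⟨_, hmem q hq p hp h⟩)
    have := (Set.ncard_pos hfin).mpr this
    omega
  · obtain ⟨p, hp, q, hq, r, hr, hpq, hpr, hqr⟩ := (Set.two_lt_ncard hP).mp (by omega)
    have hsrc : ∀ {x y z}, x ∈ P → y ∈ P → z ∈ P → x ≠ y → x ≠ z → y ≠ z → f x ∈ T :=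
      fun hx hy hz hxy hxz hyz => (exists_arc_of_three htot hfun hx hy hz hxy hxz hyz).elim
        (hmem _ hx _ hy) (hmem _ hx _ hz)
    have : 1 < T.ncard := by
      rw [Set.one_lt_ncard hfin]
      by_cases hpq' : f p = f q
      · refine ⟨_, hsrc hp hq hr hpq hpr hqr, _, hsrc hr hp hq hpr.symm hqr.symm hpq,
          fun hpr' => ?_⟩
        rcases hf p hp q hq r hr hpq' hpr' with h | h | h <;> contradiction
      · exact ⟨_, hsrc hp hq hr hpq hpr hqr, _, hsrc hq hp hr hpq.symm hqr hpr, hpq'⟩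
    omega

end Tournament


namespace pairIdx

variable {n k : ℕ} {i j i' j' c : Fin n}

theorem symm (h : pairIdx k i j) : pairIdx k j i := by
  obtain ⟨t, ht, h⟩ := h
  exact ⟨t, ht, h.symm⟩

theorem lt (h : pairIdx k i j) : i.val < 2 * k := by
  obtain ⟨t, ht, h⟩ := h
  omega

theorem div_two_eq (h : pairIdx k i j) : j.val / 2 = i.val / 2 := by
  obtain ⟨t, ht, h⟩ := h
  omega

theorem ne (h : pairIdx k i j) : i ≠ j := by
  obtain ⟨t, ht, h⟩ := h
  rintro rfl
  omega

theorem of_div_two_eq (hi : i.val < 2 * k) (hb : j.val / 2 = i.val / 2) (hij : i ≠ j) :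
    pairIdx k i j :=
  ⟨i.val / 2, by omega, by have := Fin.val_ne_of_ne hij; omega⟩

theorem eq_or_eq (h : pairIdx k i j) (hc : c.val / 2 = i.val / 2) : c = i ∨ c = j := by
  obtain ⟨t, ht, h⟩ := h
  rw [Fin.ext_iff, Fin.ext_iff]
  omega

theorem unique (h : pairIdx k i j) (h' : pairIdx k i j') : j = j' := by
  obtain ⟨t, ht, h⟩ := h
  obtain ⟨t', ht', h'⟩ := h'
  rw [Fin.ext_iff]
  omega

theorem eq_and_eq_or_eq_and_eq (h : pairIdx k i j) (h' : pairIdx k i' j')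
    (hb : i'.val / 2 = i.val / 2) : (i' = i ∧ j' = j) ∨ (i' = j ∧ j' = i) := by
  rcases h.eq_or_eq hb with rfl | rfl
  · exact Or.inl ⟨rfl, h'.unique h⟩
  · exact Or.inr ⟨rfl, h'.unique h.symm⟩

end pairIdx

section Hgraph

open Sum

variable {n k : ℕ} {i j : Fin n} {M N : Set (Sym2 (Fin n ⊕ Fin n))}

theorem Hgraph_adj_inl_inr : (Hgraph n k).Adj (inl i) (inr j) ↔ i = j ∨ ¬ pairIdx k i j := by
  simp [Hgraph]

theorem Hgraph_adj_inr_inl : (Hgraph n k).Adj (inr i) (inl j) ↔ j = i ∨ ¬ pairIdx k j i := by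
  rw [adj_comm, Hgraph_adj_inl_inr]

theorem Hgraph_adj_inl_inl : (Hgraph n k).Adj (inl i) (inl j) ↔ pairIdx k i j := by
  simp only [Hgraph, fromRel_adj, ne_eq, inl.injEq]
  exact ⟨fun h => h.2.elim id pairIdx.symm, fun h => ⟨h.ne, Or.inl h⟩⟩

theorem Hgraph_adj_inr_inr : (Hgraph n k).Adj (inr i) (inr j) ↔ pairIdx k i j := by
  simp only [Hgraph, fromRel_adj, ne_eq, inr.injEq]
  exact ⟨fun h => h.2.elim id pairIdx.symm, fun h => ⟨h.ne, Or.inl h⟩⟩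

theorem IsPM.ncard_eq_of_Hgraph (hM : IsPM (Hgraph n k) M) : M.ncard = n := by
  have := hM.card_eq_two_mul_ncard
  simp only [Fintype.card_sum, Fintype.card_fin] at this
  omega

theorem isPM_M0 : IsPM (Hgraph n k) (M0 n) := by
  have hM0 : M0 n = Set.range fun x : Fin n ⊕ Fin n => s(x, x.swap) := by
    ext e
    refine ⟨fun ⟨i, he⟩ => ⟨inl i, he.symm⟩, ?_⟩
    rintro ⟨i | i, rfl⟩
    exacts [⟨i, rfl⟩, ⟨i, Sym2.eq_swap⟩]
  rw [hM0]
  refine isPM_range Sum.swap_swap fun x => ?_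
  rcases x with i | i
  exacts [Hgraph_adj_inl_inr.mpr (Or.inl rfl), Hgraph_adj_inr_inl.mpr (Or.inl rfl)]

theorem ncard_le_one_of_subset_M0 (hN0 : N ⊆ M0 n)
    (hN : NoAlternatingSquare (Hgraph n k) N) : N.ncard ≤ 1 := by
  refine (Set.ncard_le_one_iff).mpr fun {e f} he hf => by_contra fun hne => ?_
  obtain ⟨i, rfl⟩ := hN0 he
  obtain ⟨j, rfl⟩ := hN0 hf
  by_cases hij : pairIdx k i j
  · exact hN (inl i) (inr i) (inr j) (inl j) he (Sym2.eq_swap ▸ hf)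
      (Sym2.eq_swap (a := inr j) ▸ hne) (Hgraph_adj_inl_inl.mpr hij)
      (Hgraph_adj_inr_inr.mpr hij.symm)
  · exact hN (inl i) (inr i) (inl j) (inr j) he hf hne (Hgraph_adj_inl_inr.mpr (Or.inr hij))
      (Hgraph_adj_inl_inr.mpr (Or.inr fun h => hij h.symm))

theorem forcingNum_M0 : forcingNum (Hgraph n k) (M0 n) = n - 1 := by
  have hM0 : IsPM (Hgraph n k) (M0 n) := isPM_M0
  have hle := hM0.forcingNum_le_ncard_sub_one
  have hge := hM0.ncard_sub_le_forcingNum fun _ hN0 hN => ncard_le_one_of_subset_M0 hN0 hN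
  rw [hM0.ncard_eq_of_Hgraph] at hle hge
  exact le_antisymm hle hge

theorem maxForcing_Hgraph : maxForcing (Hgraph n k) = n - 1 := by
  refine IsGreatest.csSup_eq ⟨⟨M0 n, isPM_M0, forcingNum_M0⟩, ?_⟩
  rintro _ ⟨M, hM, rfl⟩
  exact hM.forcingNum_le_ncard_sub_one.trans_eq (by rw [hM.ncard_eq_of_Hgraph])

def crossEdge (p : Fin n × Fin n) : Sym2 (Fin n ⊕ Fin n) := s(inl p.1, inr p.2)

theorem crossEdge_injective : Function.Injective (crossEdge (n := n)) := by
  rintro ⟨a, b⟩ ⟨c, d⟩ h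
  simpa [crossEdge] using h

def pairBlock (e : Sym2 (Fin n ⊕ Fin n)) : ℕ :=
  Sym2.lift ⟨fun x y => min (Sum.elim Fin.val Fin.val x) (Sum.elim Fin.val Fin.val y) / 2,
    fun _ _ => by simp only [min_comm]⟩ e

theorem pairIdx.pairBlock_eq (h : pairIdx k i j) :
    pairBlock s(inl i, inl j) = i.val / 2 ∧ pairBlock s(inr i, inr j) = i.val / 2 := by
  have := h.div_two_eq
  simp only [pairBlock, Sym2.lift_mk, elim_inl, elim_inr]
  omega

/-- The blocks `t` whose two special pairs both meet cross edges of `N`, at `u_a` and `v_{b'}`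
with `{a, b'}` the `t`-th special pair. -/
def arcBlocks (k : ℕ) (N : Set (Sym2 (Fin n ⊕ Fin n))) : Set ℕ :=
  (fun p : Fin n × Fin n => p.1.val / 2) ''
    {p ∈ crossEdge ⁻¹' N | ∃ q ∈ crossEdge ⁻¹' N, pairIdx k p.1 q.2}

theorem exists_pairIdx_of_notMem_range_crossEdge {e : Sym2 (Fin n ⊕ Fin n)}
    (he : e ∈ (Hgraph n k).edgeSet) (hc : e ∉ Set.range crossEdge) :
    ∃ i j, pairIdx k i j ∧ pairBlock e = i.val / 2 ∧
      (e = s(inl i, inl j) ∨ e = s(inr i, inr j)) := by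
  induction e using Sym2.ind with
  | _ x y =>
    rcases x with i | i <;> rcases y with j | j
    · have h := Hgraph_adj_inl_inl.mp he
      exact ⟨i, j, h, h.pairBlock_eq.1, Or.inl rfl⟩
    · exact absurd ⟨(i, j), rfl⟩ hc
    · exact absurd ⟨(j, i), Sym2.eq_swap⟩ hc
    · have h := Hgraph_adj_inr_inr.mp he
      exact ⟨i, j, h, h.pairBlock_eq.2, Or.inr rfl⟩

theorem IsPM.crossEdge_ne (hM : IsPM (Hgraph n k) M) {p q : Fin n × Fin n}
    (hp : crossEdge p ∈ M) (hq : crossEdge q ∈ M) (hpq : p ≠ q) :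
    p.1 ≠ q.1 ∧ p.2 ≠ q.2 := by
  refine ⟨fun h => hpq (crossEdge_injective ?_), fun h => hpq (crossEdge_injective ?_)⟩
  · exact hM.eq_of_mem_of_mem hp hq (Sym2.mem_mk_left _ _) (h ▸ Sym2.mem_mk_left _ _)
  · exact hM.eq_of_mem_of_mem hp hq (Sym2.mem_mk_right _ _) (h ▸ Sym2.mem_mk_right _ _)

theorem ncard_preimage_crossEdge_le (hM : IsPM (Hgraph n k) M) (hNM : N ⊆ M)
    (hN : NoAlternatingSquare (Hgraph n k) N) :
    (crossEdge ⁻¹' N).ncard ≤ (arcBlocks k N).ncard + 1 := by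
  have hne : ∀ p ∈ crossEdge ⁻¹' N, ∀ q ∈ crossEdge ⁻¹' N, p ≠ q →
      p.1 ≠ q.1 ∧ p.2 ≠ q.2 := fun p hp q hq => hM.crossEdge_ne (hNM hp) (hNM hq)
  refine ncard_le_ncard_image_add_one_of_tournament _ (fun p hp q hq hpq => ?_)
    (fun p _ q hq r hr hpq hpr => ?_) (fun p hp q hq r hr hpq hpr => ?_)
  · by_contra! h
    exact hN (inl p.1) (inr p.2) (inl q.1) (inr q.2) hp hq (crossEdge_injective.ne hpq)
      (Hgraph_adj_inl_inr.mpr (Or.inr h.1)) (Hgraph_adj_inl_inr.mpr (Or.inr h.2))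
  · by_contra hqr
    exact (hne q hq r hr hqr).2 (hpq.unique hpr)
  · by_contra! h
    have := Fin.val_ne_of_ne (hne p hp q hq h.1).1
    have := Fin.val_ne_of_ne (hne p hp r hr h.2.1).1
    have := Fin.val_ne_of_ne (hne q hq r hr h.2.2).1
    omega

theorem NoAlternatingSquare.eq_of_same_pair (hN : NoAlternatingSquare (Hgraph n k) N)
    {e e' : Sym2 (Fin n ⊕ Fin n)} (he : e ∈ N) (he' : e' ∈ N)
    (hei : e = s(inl i, inl j) ∨ e = s(inr i, inr j))
    (hei' : e' = s(inl i, inl j) ∨ e' = s(inr i, inr j)) : e = e' := by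
  have key : s(inl i, inl j) ∈ N → s(inr i, inr j) ∈ N → False := fun hl hr =>
    hN (inl i) (inl j) (inr j) (inr i) hl (Sym2.eq_swap ▸ hr) (by simp)
      (Hgraph_adj_inl_inr.mpr (Or.inl rfl)) (Hgraph_adj_inr_inl.mpr (Or.inl rfl))
  rcases hei with rfl | rfl <;> rcases hei' with rfl | rfl
  exacts [rfl, (key he he').elim, (key he' he).elim, rfl]

theorem pairBlock_notMem_arcBlocks (hM : IsPM (Hgraph n k) M) (hNM : N ⊆ M)
    {e : Sym2 (Fin n ⊕ Fin n)} (he : e ∈ N \ Set.range crossEdge) :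
    pairBlock e ∉ arcBlocks k N := by
  obtain ⟨i, j, h, hb, hij⟩ := exists_pairIdx_of_notMem_range_crossEdge (hM.1 (hNM he.1)) he.2
  rintro ⟨p, ⟨hp, q, hq, hpq⟩, hpb⟩
  rw [hb] at hpb
  -- the cross edge `p` (resp. `q`) would share an endpoint with the `u`-pair (resp. `v`-pair)
  rcases hij with rfl | rfl
  · have hp1 : (inl p.1 : Fin n ⊕ Fin n) ∈ s(inl i, inl j) := by
      rcases h.eq_or_eq hpb with h1 | h1 <;> simp [h1]
    exact he.2 ⟨p, (hM.eq_of_mem_of_mem (hNM he.1) (hNM hp) hp1 (Sym2.mem_mk_left _ _)).symm⟩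
  · have hq2 : (inr q.2 : Fin n ⊕ Fin n) ∈ s(inr i, inr j) := by
      rcases h.eq_or_eq (hpq.div_two_eq.trans hpb) with h1 | h1 <;> simp [h1]
    exact he.2 ⟨q, (hM.eq_of_mem_of_mem (hNM he.1) (hNM hq) hq2 (Sym2.mem_mk_right _ _)).symm⟩

theorem injOn_pairBlock (hM : IsPM (Hgraph n k) M) (hNM : N ⊆ M)
    (hN : NoAlternatingSquare (Hgraph n k) N) : Set.InjOn pairBlock (N \ Set.range crossEdge) := by
  intro e he e' he' hee'
  obtain ⟨i, j, h, hb, hij⟩ := exists_pairIdx_of_notMem_range_crossEdge (hM.1 (hNM he.1)) he.2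
  obtain ⟨i', j', h', hb', hij'⟩ :=
    exists_pairIdx_of_notMem_range_crossEdge (hM.1 (hNM he'.1)) he'.2
  refine hN.eq_of_same_pair he.1 he'.1 hij ?_
  rcases h.eq_and_eq_or_eq_and_eq h' (hb'.symm.trans (hee'.symm.trans hb)) with
    ⟨rfl, rfl⟩ | ⟨rfl, rfl⟩
  · exact hij'
  · rwa [Sym2.eq_swap, Sym2.eq_swap (a := inr j')]

theorem ncard_sdiff_range_crossEdge_add_le (hM : IsPM (Hgraph n k) M) (hNM : N ⊆ M)
    (hN : NoAlternatingSquare (Hgraph n k) N) :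
    (N \ Set.range crossEdge).ncard + (arcBlocks k N).ncard ≤ k := by
  have hsub : arcBlocks k N ⊆ Set.Iio k := by
    rintro _ ⟨p, ⟨-, q, -, hpq⟩, rfl⟩
    exact Nat.div_lt_of_lt_mul hpq.lt
  have hmaps : ∀ e ∈ N \ Set.range crossEdge, pairBlock e ∈ Set.Iio k \ arcBlocks k N := by
    intro e he
    obtain ⟨i, j, h, hb, -⟩ := exists_pairIdx_of_notMem_range_crossEdge (hM.1 (hNM he.1)) he.2
    exact ⟨hb ▸ Nat.div_lt_of_lt_mul h.lt, pairBlock_notMem_arcBlocks hM hNM he⟩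
  have hle := Set.ncard_le_ncard_of_injOn pairBlock hmaps (injOn_pairBlock hM hNM hN)
    (Set.finite_Iio k).sdiff
  have hE := Set.ncard_le_ncard hsub
  rw [Set.ncard_sdiff hsub ((Set.finite_Iio k).subset hsub), Set.ncard_Iio_nat] at hle
  rw [Set.ncard_Iio_nat] at hE
  omega

theorem ncard_le_of_noAlternatingSquare (hM : IsPM (Hgraph n k) M) (hNM : N ⊆ M)
    (hN : NoAlternatingSquare (Hgraph n k) N) : N.ncard ≤ k + 1 := by
  have hsplit : N.ncard = (N \ Set.range crossEdge).ncard + (crossEdge ⁻¹' N).ncard := by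
    rw [← Set.preimage_inter_range, Set.ncard_preimage_of_injective_subset_range
      crossEdge_injective Set.inter_subset_right, add_comm,
      Set.ncard_inter_add_ncard_sdiff_eq_ncard]
  have := ncard_preimage_crossEdge_le hM hNM hN
  have := ncard_sdiff_range_crossEdge_add_le hM hNM hN
  omega

theorem IsPM.sub_le_forcingNum_of_Hgraph (hM : IsPM (Hgraph n k) M) :
    n - (k + 1) ≤ forcingNum (Hgraph n k) M := by
  have := hM.ncard_sub_le_forcingNum fun _ hNM hN => ncard_le_of_noAlternatingSquare hM hNM hN
  rwa [hM.ncard_eq_of_Hgraph] at this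

open Classical in
noncomputable def pairMate (k : ℕ) : Fin n ⊕ Fin n → Fin n ⊕ Fin n
  | inl i => if h : ∃ j, pairIdx k i j then inl h.choose else inr i
  | inr i => if h : ∃ j, pairIdx k i j then inr h.choose else inl i

theorem pairMate_inl_of_pairIdx (h : pairIdx k i j) : pairMate k (inl i) = inl j := by
  have hex : ∃ j, pairIdx k i j := ⟨j, h⟩
  simp only [pairMate, hex, dite_true, inl.injEq]
  exact hex.choose_spec.unique h

theorem pairMate_inr_of_pairIdx (h : pairIdx k i j) : pairMate k (inr i) = inr j := by
  have hex : ∃ j, pairIdx k i j := ⟨j, h⟩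
  simp only [pairMate, hex, dite_true, inr.injEq]
  exact hex.choose_spec.unique h

theorem pairMate_inl_of_forall (h : ∀ j, ¬ pairIdx k i j) : pairMate k (inl i) = inr i := by
  simp [pairMate, h]

theorem pairMate_inr_of_forall (h : ∀ j, ¬ pairIdx k i j) : pairMate k (inr i) = inl i := by
  simp [pairMate, h]

theorem pairMate_involutive : Function.Involutive (pairMate (n := n) k) := by
  rintro (i | i) <;> by_cases h : ∃ j, pairIdx k i j
  · obtain ⟨j, h⟩ := h
    rw [pairMate_inl_of_pairIdx h, pairMate_inl_of_pairIdx h.symm]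
  · rw [not_exists] at h
    rw [pairMate_inl_of_forall h, pairMate_inr_of_forall h]
  · obtain ⟨j, h⟩ := h
    rw [pairMate_inr_of_pairIdx h, pairMate_inr_of_pairIdx h.symm]
  · rw [not_exists] at h
    rw [pairMate_inr_of_forall h, pairMate_inl_of_forall h]

theorem Hgraph_adj_pairMate (x : Fin n ⊕ Fin n) : (Hgraph n k).Adj x (pairMate k x) := by
  rcases x with i | i <;> by_cases h : ∃ j, pairIdx k i j
  · obtain ⟨j, h⟩ := h
    rw [pairMate_inl_of_pairIdx h]
    exact Hgraph_adj_inl_inl.mpr h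
  · rw [not_exists] at h
    rw [pairMate_inl_of_forall h]
    exact Hgraph_adj_inl_inr.mpr (Or.inl rfl)
  · obtain ⟨j, h⟩ := h
    rw [pairMate_inr_of_pairIdx h]
    exact Hgraph_adj_inr_inr.mpr h
  · rw [not_exists] at h
    rw [pairMate_inr_of_forall h]
    exact Hgraph_adj_inr_inl.mpr (Or.inl rfl)

theorem pairMate_inl_eq_inr (h : pairMate k (inl i) = inr j) :
    i = j ∧ ∀ j', ¬ pairIdx k i j' := by
  by_cases hex : ∃ j, pairIdx k i j
  · obtain ⟨j', h'⟩ := hex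
    rw [pairMate_inl_of_pairIdx h'] at h
    exact absurd h inl_ne_inr
  · rw [not_exists] at hex
    rw [pairMate_inl_of_forall hex, inr.injEq] at h
    exact ⟨h, hex⟩

def pairMatching (n k : ℕ) : Set (Sym2 (Fin n ⊕ Fin n)) :=
  Set.range fun x => s(x, pairMate k x)

theorem isPM_pairMatching : IsPM (Hgraph n k) (pairMatching n k) :=
  isPM_range pairMate_involutive Hgraph_adj_pairMate

/-- The edges of `pairMatching n k` at `u_0, …, u_{n-2}`; each special pair is indexed by its
lower end. -/
def pairForcingSet (n k : ℕ) : Set (Sym2 (Fin n ⊕ Fin n)) :=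
  (fun i : Fin n => s(inl i, pairMate k (inl i))) ''
    {i | i.val < n - 1 ∧ ∀ j, pairIdx k i j → i < j}

theorem ncard_pairForcingSet_le (hk : 2 * k < n) : (pairForcingSet n k).ncard ≤ n - 1 - k := by
  refine (Set.ncard_image_le (Set.toFinite _)).trans ?_
  -- `i ↦ i / 2` on the lower members `2t` of the pairs, `i ↦ i - k` on the unpaired indices
  refine (Set.ncard_le_ncard_of_injOn (t := Set.Iio (n - 1 - k))
    (fun i : Fin n => if i.val < 2 * k then i.val / 2 else i.val - k) ?_ ?_).trans_eq
    (Set.ncard_Iio_nat _)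
  · rintro i ⟨hi, -⟩
    simp only [Set.mem_Iio]
    split_ifs <;> omega
  · rintro i ⟨-, hi⟩ i' ⟨-, hi'⟩ h
    simp only at h
    by_contra hne
    split_ifs at h with h1 h2 h2
    · have hp := pairIdx.of_div_two_eq h1 h.symm hne
      exact absurd (hi i' hp) (not_lt.mpr (hi' i hp.symm).le)
    all_goals omega

theorem IsPM.mate_inl_of_lt_of_pairForcingSet_subset (hM : IsPM (Hgraph n k) M)
    (hS : pairForcingSet n k ⊆ M) {i : Fin n} (hi : i.val < n - 1) :
    hM.mate (inl i) = pairMate k (inl i) := by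
  by_cases hlow : ∀ j, pairIdx k i j → i < j
  · exact hM.mk_mem_iff.mp (hS ⟨i, ⟨hi, hlow⟩, rfl⟩)
  push Not at hlow
  obtain ⟨j, hij, hji⟩ := hlow
  have hj : j ∈ {i | i.val < n - 1 ∧ ∀ j, pairIdx k i j → i < j} :=
    ⟨by have := Fin.val_le_of_le hji; omega, fun j' hj' => hij.symm.unique hj' ▸
      lt_of_le_of_ne hji hij.ne.symm⟩
  have : s(inl j, pairMate k (inl j)) ∈ M := hS ⟨j, hj, rfl⟩
  rw [pairMate_inl_of_pairIdx hij.symm, Sym2.eq_swap, hM.mk_mem_iff] at this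
  rw [this, pairMate_inl_of_pairIdx hij]

theorem IsPM.mate_inl_of_pairForcingSet_subset (hk : 2 * k < n) (hM : IsPM (Hgraph n k) M)
    (hS : pairForcingSet n k ⊆ M) (i : Fin n) : hM.mate (inl i) = pairMate k (inl i) := by
  by_cases hi : i.val < n - 1
  · exact hM.mate_inl_of_lt_of_pairForcingSet_subset hS hi
  -- `i = n - 1` is unpaired, and `u_i` is the only neighbour of `v_i` left uncovered
  have hno : ∀ j, ¬ pairIdx k i j := fun j h => by have := h.lt; omega
  rw [pairMate_inl_of_forall hno]
  suffices h : hM.mate (inr i) = inl i by rw [← h, hM.mate_mate]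
  have hadj := hM.adj_mate (inr i)
  rcases hy : hM.mate (inr i) with j | j
  · by_contra hji
    have hj : j.val < n - 1 := by
      have := Fin.val_ne_of_ne fun h : j = i => hji (h ▸ rfl)
      omega
    have hji' : hM.mate (inl j) = inr i := by rw [← hy, hM.mate_mate]
    rw [hM.mate_inl_of_lt_of_pairForcingSet_subset hS hj] at hji'
    exact hji (congrArg inl (pairMate_inl_eq_inr hji').1)
  · rw [hy, Hgraph_adj_inr_inr] at hadj
    exact absurd hadj (hno j)

theorem isForcingSet_pairForcingSet (hk : 2 * k < n) :
    IsForcingSet (Hgraph n k) (pairMatching n k) (pairForcingSet n k) := by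
  refine ⟨?_, fun M hM hS => isPM_pairMatching.eq_of_subset hM ?_⟩
  · rintro _ ⟨i, -, rfl⟩
    exact ⟨inl i, rfl⟩
  rintro _ ⟨x, rfl⟩
  have hinl := hM.mate_inl_of_pairForcingSet_subset hk hS
  rw [hM.mk_mem_iff]
  rcases x with i | i
  · exact hinl i
  by_cases h : ∃ j, pairIdx k i j
  · obtain ⟨j, h⟩ := h
    rw [pairMate_inr_of_pairIdx h]
    have hadj := hM.adj_mate (inr i)
    rcases hy : hM.mate (inr i) with j' | j'
    · have hji : hM.mate (inl j') = inr i := by rw [← hy, hM.mate_mate]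
      obtain ⟨rfl, hno⟩ := pairMate_inl_eq_inr (hinl j' ▸ hji)
      exact absurd h (hno j)
    · rw [hy, Hgraph_adj_inr_inr] at hadj
      rw [hadj.unique h]
  · rw [not_exists] at h
    have := hinl i
    rw [pairMate_inl_of_forall h] at this
    rw [pairMate_inr_of_forall h, ← this, hM.mate_mate]

end Hgraph

theorem minForcing_Hgraph {n k : ℕ} (hk : k ≤ (n - 1) / 2) :
    minForcing (Hgraph n k) = n - 1 - k := by
  refine le_antisymm ?_ (le_csInf ⟨_, M0 n, isPM_M0, rfl⟩ ?_)
  · rcases Nat.eq_zero_or_pos n with rfl | hn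
    · exact (minForcing_le isPM_M0).trans_eq (forcingNum_M0.trans (by omega))
    have hk' : 2 * k < n := by omega
    calc minForcing (Hgraph n k) ≤ forcingNum (Hgraph n k) (pairMatching n k) :=
          minForcing_le isPM_pairMatching
      _ ≤ (pairForcingSet n k).ncard := forcingNum_le (isForcingSet_pairForcingSet hk')
      _ ≤ n - 1 - k := ncard_pairForcingSet_le hk'
  · rintro _ ⟨M, hM, rfl⟩
    have := hM.sub_le_forcingNum_of_Hgraph
    omega

theorem stmt14_general (n k : ℕ) :
    IsPM (Hgraph n k) (M0 n) ∧
    forcingNum (Hgraph n k) (M0 n) = n - 1 ∧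
    maxForcing (Hgraph n k) = n - 1 ∧
    (k = (n - 1) / 2 → minForcing (Hgraph n k) = n / 2) := by
  refine ⟨isPM_M0, forcingNum_M0, maxForcing_Hgraph, ?_⟩
  rintro rfl
  rw [minForcing_Hgraph le_rfl]
  omega

/-- Remark 5.3 together with the definition of `H_k`. -/
theorem stmt14 (n k : ℕ) (hn : 1 ≤ n) (hk : k ≤ (n - 1) / 2) :
    IsPM (Hgraph n k) (M0 n) ∧
    forcingNum (Hgraph n k) (M0 n) = n - 1 ∧
    maxForcing (Hgraph n k) = n - 1 ∧
    (k = (n - 1) / 2 → minForcing (Hgraph n k) = n / 2) :=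
  stmt14_general n k
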